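/- Let q ∈ ℕ. The map w ↦ (ω(w), r(w)) that assigns to each w ∈ W its (unique) right-sided w-Gauß–Radau quadrature of order q is continuous from (W, ‖·‖_{L¹(−1,1)}) to ℝ^{q+1} × (−1,1]^{q+1}; that is, if w_n → w in L¹(−1,1) with all w_n, w ∈ W, then ω(w_n) → ω(w) in ℝ^{q+1} and r(w_n) → r(w) in ℝ^{q+1}. -/

import Mathlib

open MeasureTheory Real Filter

/-- The class `W` of weighting functions: `w ∈ L¹(-1,1)` with `w > 0` almost everywhere. -/
def IsWeight (w : ℝ → ℝ) : Prop :=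
  IntegrableOn w (Set.Ioo (-1 : ℝ) 1) ∧
    ∀ᵐ x ∂(volume.restrict (Set.Ioo (-1 : ℝ) 1)), 0 < w x

/-- A (right-sided) `w`-Gauß–Radau quadrature of order `q`. -/
def IsGaussRadauQuad (q : ℕ) (w : ℝ → ℝ) (ω r : Fin (q + 1) → ℝ) : Prop :=
  (∀ j, r j ∈ Set.Icc (-1 : ℝ) 1) ∧ Monotone r ∧ r (Fin.last q) = 1 ∧
    ∀ p : Polynomial ℝ, p.natDegree ≤ 2 * q →
      ∫ x in Set.Ioo (-1 : ℝ) 1, p.eval x * w x = ∑ j, ω j * p.eval (r j)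

/-! Weights of a Gauß–Radau quadrature are positive (integrate the squared Lagrange basis
polynomial) and sum to `∫ w`, and its nodes lie in `[-1, 1]`; so the quadratures of the `w n`
stay in a compact set. Since the moments `∫ p * w n` converge to `∫ p * w₀` and exactness is a
closed condition, every cluster point is a Gauß–Radau quadrature for `w₀`, hence equals
`(ω₀, r₀)` by uniqueness.

Uniqueness: for two quadratures `(ω, r)`, `(ω', r')` and `j ≠ last`, the product of the nodal
polynomial of `r` (degree `q + 1`) with the nodal polynomial of the `r' i`, `i ∉ {j, last}`
(degree `q - 1`), is integrated exactly by both; the first rule gives `0`, the second gives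
`ω' j` times its value at `r' j`, so `r' j` is a node of `r`. Sorted nodes with equal ranges
coincide, and each weight is the integral of the corresponding Lagrange basis polynomial.
-/

open Polynomial Topology

lemma integrableOn_eval_mul (p : ℝ[X]) {w : ℝ → ℝ} {a b : ℝ}
    (hw : IntegrableOn w (Set.Ioo a b)) :
    IntegrableOn (fun x => p.eval x * w x) (Set.Ioo a b) :=
  hw.continuousOn_mul_of_subset p.continuous.continuousOn isCompact_Icc measurableSet_Ioo
    Set.Ioo_subset_Icc_self

lemma tendsto_integral_eval_mul {ι : Type*} {l : Filter ι} {a b : ℝ}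
    {w : ι → ℝ → ℝ} {w₀ : ℝ → ℝ} (hw : ∀ i, IntegrableOn (w i) (Set.Ioo a b))
    (hw₀ : IntegrableOn w₀ (Set.Ioo a b))
    (hconv : Tendsto (fun i => ∫ x in Set.Ioo a b, |w i x - w₀ x|) l (𝓝 0)) (p : ℝ[X]) :
    Tendsto (fun i => ∫ x in Set.Ioo a b, p.eval x * w i x) l
      (𝓝 (∫ x in Set.Ioo a b, p.eval x * w₀ x)) := by
  obtain ⟨C, hC⟩ := isCompact_Icc.exists_bound_of_continuousOn
    (p.continuous.continuousOn (s := Set.Icc a b))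
  have hdist : ∀ i, dist (∫ x in Set.Ioo a b, p.eval x * w i x)
      (∫ x in Set.Ioo a b, p.eval x * w₀ x) ≤ C * ∫ x in Set.Ioo a b, |w i x - w₀ x| := by
    intro i
    rw [dist_eq_norm,
      ← integral_sub (integrableOn_eval_mul p (hw i)) (integrableOn_eval_mul p hw₀),
      ← integral_const_mul]
    refine norm_integral_le_of_norm_le (((hw i).sub hw₀).abs.const_mul C) ?_
    filter_upwards [ae_restrict_mem measurableSet_Ioo] with x hx
    rw [← mul_sub, norm_mul, Real.norm_eq_abs (w i x - w₀ x)]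
    exact mul_le_mul_of_nonneg_right (hC x (Set.Ioo_subset_Icc_self hx)) (abs_nonneg _)
  refine tendsto_iff_dist_tendsto_zero.2 (squeeze_zero (fun _ => dist_nonneg) hdist ?_)
  simpa using hconv.const_mul C

lemma IsWeight.integral_eval_mul_pos {w : ℝ → ℝ} (hw : IsWeight w) {p : ℝ[X]} (hp : p ≠ 0)
    (hnonneg : ∀ x ∈ Set.Ioo (-1 : ℝ) 1, 0 ≤ p.eval x) :
    0 < ∫ x in Set.Ioo (-1 : ℝ) 1, p.eval x * w x := by
  set μ := volume.restrict (Set.Ioo (-1 : ℝ) 1)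
  have hroots : ∀ᵐ x ∂μ, x ∉ {x | p.IsRoot x} :=
    measure_eq_zero_iff_ae_notMem.1 <|
      Measure.restrict_le_self.absolutelyContinuous ((p.finite_setOfPred_isRoot hp).measure_zero _)
  have hpos : ∀ᵐ x ∂μ, 0 < p.eval x * w x := by
    filter_upwards [hw.2, hroots, ae_restrict_mem measurableSet_Ioo] with x hwx hpx hx
    exact mul_pos ((hnonneg x hx).lt_of_ne' hpx) hwx
  refine (integral_pos_iff_support_of_nonneg_ae (hpos.mono fun _ => le_of_lt)
    (integrableOn_eval_mul p hw.1)).2 (pos_iff_ne_zero.2 fun hnull => ?_)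
  have hμ : μ = 0 := by
    refine ae_eq_bot.1 (eventually_false_iff_eq_bot.1 ?_)
    filter_upwards [hpos, measure_eq_zero_iff_ae_notMem.1 hnull] with x hx hx'
    exact hx' hx.ne'
  norm_num [μ, Measure.restrict_eq_zero] at hμ

namespace IsGaussRadauQuad

variable {q : ℕ} {w : ℝ → ℝ} {ω r : Fin (q + 1) → ℝ}

lemma integral_eq_weight_mul_eval (h : IsGaussRadauQuad q w ω r) {p : ℝ[X]}
    (hp : p.natDegree ≤ 2 * q) (j : Fin (q + 1)) (hvanish : ∀ i ≠ j, p.eval (r i) = 0) :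
    ∫ x in Set.Ioo (-1 : ℝ) 1, p.eval x * w x = ω j * p.eval (r j) := by
  rw [h.2.2.2 p hp,
    Finset.sum_eq_single j (fun i _ hi => by rw [hvanish i hi, mul_zero]) (by simp)]

lemma strictMono (hw : IsWeight w) (h : IsGaussRadauQuad q w ω r) : StrictMono r := by
  classical
  -- A repeated node leaves at most `q` distinct nodes; the square of their nodal polynomial is
  -- integrated exactly, to `0`, although it is nonnegative and nonzero.
  refine h.2.1.strictMono_of_injective fun i j hij => by_contra fun hne => ?_
  set S := Finset.univ.image r
  have hS : S.card ≤ q := by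
    have hcard : S.card ≠ q + 1 := fun hc => hne <|
      Finset.injOn_of_card_image_eq (s := Finset.univ) (by simpa [S] using hc)
        (by simp) (by simp) hij
    have hle : S.card ≤ q + 1 := by simpa using Finset.card_image_le (s := Finset.univ) (f := r)
    omega
  have hzero := h.2.2.2 (Lagrange.nodal S id ^ 2)
    (by rw [natDegree_pow, Lagrange.natDegree_nodal]; omega)
  have hnode : ∀ k, (Lagrange.nodal S id).eval (r k) = 0 := fun k =>
    Lagrange.eval_nodal_at_node (v := id) (Finset.mem_image_of_mem r (Finset.mem_univ k))
  simp only [eval_pow, hnode, zero_pow two_ne_zero, mul_zero, Finset.sum_const_zero] at hzero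
  have hpos := hw.integral_eval_mul_pos
    (pow_ne_zero 2 (Lagrange.nodal_ne_zero (s := S) (v := id))) fun x _ => by
      rw [eval_pow]; positivity
  simp only [eval_pow] at hpos
  exact hpos.ne' hzero

lemma weight_pos (hw : IsWeight w) (h : IsGaussRadauQuad q w ω r) (j : Fin (q + 1)) :
    0 < ω j := by
  classical
  have hinj : Set.InjOn r ↑(Finset.univ : Finset (Fin (q + 1))) :=
    (h.strictMono hw).injective.injOn
  set b := Lagrange.basis Finset.univ r j
  have hb := h.integral_eq_weight_mul_eval (p := b ^ 2)
    (by rw [natDegree_pow, Lagrange.natDegree_basis hinj (Finset.mem_univ j)]; simp)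
    j fun i hi => by simp [b, Lagrange.eval_basis_of_ne hi.symm]
  have hpos := hw.integral_eval_mul_pos (pow_ne_zero 2 (Lagrange.basis_ne_zero hinj
    (Finset.mem_univ j))) fun x _ => by rw [eval_pow]; positivity
  rw [hb, eval_pow, Lagrange.eval_basis_self hinj (Finset.mem_univ j)] at hpos
  simpa using hpos

lemma weight_le_integral (hw : IsWeight w) (h : IsGaussRadauQuad q w ω r) (j : Fin (q + 1)) :
    ω j ≤ ∫ x in Set.Ioo (-1 : ℝ) 1, w x := by
  have hmass := h.2.2.2 1 (by simp)
  simp only [eval_one, one_mul, mul_one] at hmass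
  rw [hmass]
  exact Finset.single_le_sum (fun i _ => (h.weight_pos hw i).le) (Finset.mem_univ j)

lemma weight_eq_integral_basis (hw : IsWeight w) (h : IsGaussRadauQuad q w ω r)
    (k : Fin (q + 1)) :
    ω k = ∫ x in Set.Ioo (-1 : ℝ) 1, (Lagrange.basis Finset.univ r k).eval x * w x := by
  classical
  have hinj : Set.InjOn r ↑(Finset.univ : Finset (Fin (q + 1))) :=
    (h.strictMono hw).injective.injOn
  rw [h.integral_eq_weight_mul_eval
    (by rw [Lagrange.natDegree_basis hinj (Finset.mem_univ k)]; simp; omega) k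
    fun i hi => Lagrange.eval_basis_of_ne hi.symm (Finset.mem_univ i),
    Lagrange.eval_basis_self hinj (Finset.mem_univ k), mul_one]

lemma range_subset_range (hw : IsWeight w) {ω' r' : Fin (q + 1) → ℝ}
    (h : IsGaussRadauQuad q w ω r) (h' : IsGaussRadauQuad q w ω' r') :
    Set.range r' ⊆ Set.range r := by
  classical
  rintro _ ⟨j, rfl⟩
  rcases eq_or_ne j (Fin.last q) with rfl | hj
  · exact ⟨Fin.last q, h.2.2.1.trans h'.2.2.1.symm⟩
  have hjq : (j : ℕ) < q := Fin.val_lt_last hj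
  set s := (Finset.univ.erase j).erase (Fin.last q)
  set p := Lagrange.nodal Finset.univ r * Lagrange.nodal s r'
  have hdeg : p.natDegree ≤ 2 * q := by
    refine natDegree_mul_le.trans ?_
    rw [Lagrange.natDegree_nodal, Lagrange.natDegree_nodal,
      Finset.card_erase_of_mem (Finset.mem_erase.2 ⟨hj.symm, Finset.mem_univ _⟩),
      Finset.card_erase_of_mem (Finset.mem_univ j)]
    simp only [Finset.card_univ, Fintype.card_fin]
    omega
  have hnode : ∀ i, (Lagrange.nodal Finset.univ r).eval (r i) = 0 := fun i =>
    Lagrange.eval_nodal_at_node (Finset.mem_univ i)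
  have hvanish : ∀ i ≠ j, p.eval (r' i) = 0 := by
    intro i hi
    rcases eq_or_ne i (Fin.last q) with rfl | hi'
    · simp [p, h'.2.2.1, ← h.2.2.1, hnode]
    · rw [eval_mul, Lagrange.eval_nodal_at_node
        (Finset.mem_erase.2 ⟨hi', Finset.mem_erase.2 ⟨hi, Finset.mem_univ i⟩⟩), mul_zero]
  have hzero := h.2.2.2 p hdeg
  rw [h'.integral_eq_weight_mul_eval hdeg j hvanish,
    Finset.sum_eq_zero fun i _ => by simp [p, hnode]] at hzero
  have hs : (Lagrange.nodal s r').eval (r' j) ≠ 0 :=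
    Lagrange.eval_nodal_not_at_node fun i hi =>
      (h'.strictMono hw).injective.ne (Finset.ne_of_mem_erase (Finset.mem_of_mem_erase hi)).symm
  have hroot : (Lagrange.nodal Finset.univ r).eval (r' j) = 0 := by
    simpa [p, (h'.weight_pos hw j).ne', hs] using hzero
  rw [Lagrange.eval_nodal, Finset.prod_eq_zero_iff] at hroot
  obtain ⟨i, -, hi⟩ := hroot
  exact ⟨i, (sub_eq_zero.1 hi).symm⟩

lemma unique (hw : IsWeight w) {ω' r' : Fin (q + 1) → ℝ}
    (h : IsGaussRadauQuad q w ω r) (h' : IsGaussRadauQuad q w ω' r') : ω = ω' ∧ r = r' := by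
  obtain rfl : r = r' := ((h.strictMono hw).range_inj (h'.strictMono hw)).1
    ((h'.range_subset_range hw h).antisymm (h.range_subset_range hw h'))
  exact ⟨funext fun k => (h.weight_eq_integral_basis hw k).trans
    (h'.weight_eq_integral_basis hw k).symm, rfl⟩

end IsGaussRadauQuad

lemma IsGaussRadauQuad.of_tendsto {q : ℕ} {ι : Type*} {l : Filter ι} [l.NeBot]
    {w : ι → ℝ → ℝ} {w₀ : ℝ → ℝ} {ω r : ι → Fin (q + 1) → ℝ}
    {ω₀ r₀ : Fin (q + 1) → ℝ}
    (h : ∀ i, IsGaussRadauQuad q (w i) (ω i) (r i))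
    (hmom : ∀ p : ℝ[X], Tendsto (fun i => ∫ x in Set.Ioo (-1 : ℝ) 1, p.eval x * w i x) l
      (𝓝 (∫ x in Set.Ioo (-1 : ℝ) 1, p.eval x * w₀ x)))
    (hω : Tendsto ω l (𝓝 ω₀)) (hr : Tendsto r l (𝓝 r₀)) :
    IsGaussRadauQuad q w₀ ω₀ r₀ := by
  have hrj := tendsto_pi_nhds.1 hr
  refine ⟨fun j => ?_, fun i j hij => ?_, ?_, fun p hp => ?_⟩
  · exact isClosed_Icc.mem_of_tendsto (hrj j) (Eventually.of_forall fun i => (h i).1 j)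
  · exact le_of_tendsto_of_tendsto' (hrj i) (hrj j) fun k => (h k).2.1 hij
  · exact tendsto_nhds_unique (hrj (Fin.last q)) <| tendsto_const_nhds.congr fun i =>
      ((h i).2.2.1).symm
  · refine tendsto_nhds_unique (hmom p) ?_
    simp_rw [fun i => (h i).2.2.2 p hp]
    exact tendsto_finsetSum _ fun j _ =>
      (tendsto_pi_nhds.1 hω j).mul ((p.continuous.tendsto _).comp (hrj j))

/-- Theorem `t:cd`: continuous dependence of the Gauß–Radau quadrature on the weighting
function: if `w_n → w₀` in `L¹(-1,1)` (all weights in `W`), then the weights and nodes of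
the associated Gauß–Radau quadratures converge to those of `w₀`. -/
theorem stmt_16 (q : ℕ) (w : ℕ → ℝ → ℝ) (w₀ : ℝ → ℝ)
    (hw : ∀ n, IsWeight (w n)) (hw₀ : IsWeight w₀)
    (ω r : ℕ → Fin (q + 1) → ℝ) (ω₀ r₀ : Fin (q + 1) → ℝ)
    (h : ∀ n, IsGaussRadauQuad q (w n) (ω n) (r n))
    (h₀ : IsGaussRadauQuad q w₀ ω₀ r₀)
    (hconv : Tendsto (fun n => ∫ x in Set.Ioo (-1 : ℝ) 1, |w n x - w₀ x|) atTop (nhds 0)) :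
    (∀ j, Tendsto (fun n => ω n j) atTop (nhds (ω₀ j))) ∧
    (∀ j, Tendsto (fun n => r n j) atTop (nhds (r₀ j))) := by
  have hmom := tendsto_integral_eval_mul (fun n => (hw n).1) hw₀.1 hconv
  obtain ⟨M, hM⟩ := (hmom 1).bddAbove_range
  have hmem : ∀ n, (ω n, r n) ∈
      Set.Icc (0 : Fin (q + 1) → ℝ) (fun _ => M) ×ˢ Set.Icc (fun _ => -1) (fun _ => 1) := by
    refine fun n => ⟨⟨fun j => ((h n).weight_pos (hw n) j).le, fun j => ?_⟩,
      fun j => ((h n).1 j).1, fun j => ((h n).1 j).2⟩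
    refine ((h n).weight_le_integral (hw n) j).trans (le_of_eq_of_le ?_ (hM ⟨n, rfl⟩))
    simp
  have hlim : Tendsto (fun n => (ω n, r n)) atTop (𝓝 (ω₀, r₀)) := by
    refine (isCompact_Icc.prod isCompact_Icc).tendsto_nhds_of_unique_mapClusterPt
      (Eventually.of_forall hmem) ?_
    rintro ⟨ω', r'⟩ - hcluster
    obtain ⟨φ, hφ, hφlim⟩ := hcluster.tendsto_subseq
    have h' := IsGaussRadauQuad.of_tendsto (fun k => h (φ k))
      (fun p => (hmom p).comp hφ.tendsto_atTop) hφlim.fst_nhds hφlim.snd_nhds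
    obtain ⟨rfl, rfl⟩ := h'.unique hw₀ h₀
    rfl
  exact ⟨tendsto_pi_nhds.1 hlim.fst_nhds, tendsto_pi_nhds.1 hlim.snd_nhds⟩
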